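/- Let M be a finite-dimensional weight module over U(∞) (i.e. M = ⊕_{λ∈X(∞)} M_λ where M_λ = {x : K_i x = v^{λ_i} x for all i}). Then E_i M = F_i M = 0 for all i ∈ ℤ, and every weight of M is a constant sequence: wt(M) ⊆ { k·𝟏 : k ∈ ℤ } where 𝟏 = (…,1,1,1,…). Consequently every finite-dimensional weight U(∞)-module is a direct sum of one-dimensional modules L(k𝟏), and is completely reducible. -/

import Mathlib

/-!
On a vector of weight `λ`, `E_i` and `F_i` shift the weight by `±α_i`, and the relation
`[E_i, F_i] = (K_i K_{i+1}⁻¹ - K_i⁻¹ K_{i+1}) / (v - v⁻¹)` forces `λ_i = λ_{i+1}` unless `E_i` or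
`F_i` is nonzero on it. Weight spaces are independent, so a finite-dimensional module has finitely
many weights, and hence only finitely many `i` at which some weight `λ` has `λ_i ≠ λ_{i+1}`. This
set of indices is closed under `i ↦ i + 1`: if `λ_i ≠ λ_{i+1} = λ_{i+2}`, the nonzero vector
`E_i x` or `F_i x` has weight `λ ± α_i`, which differs at `i + 1` and `i + 2`. So it is empty and
every weight is constant. Then `E_i x` and `F_i x` vanish, as their weights `λ ± α_i` are not.
-/

open scoped BigOperators Classical

noncomputable section

/-- `v ∈ ℚ(v)`. -/
def qv : RatFunc ℚ := RatFunc.X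

/-- The defining relations of the quantum group `U_v(gl_∞)` over `ℚ(v)`, for a family
of elements `E i, F i, K i, K i ⁻¹ = Kinv i` (`i ∈ ℤ`) of a `ℚ(v)`-algebra `U`. -/
def UqRel (U : Type*) [Ring U] [Algebra (RatFunc ℚ) U]
    (E F K Kinv : ℤ → U) : Prop :=
  (∀ i j : ℤ, K i * K j = K j * K i) ∧
  (∀ i : ℤ, K i * Kinv i = 1 ∧ Kinv i * K i = 1) ∧
  (∀ i j : ℤ, K i * E j =
    (qv ^ (((if i = j then 1 else 0) - (if i = j + 1 then 1 else 0) : ℤ))) • (E j * K i)) ∧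
  (∀ i j : ℤ, K i * F j =
    (qv ^ (((if i = j + 1 then 1 else 0) - (if i = j then 1 else 0) : ℤ))) • (F j * K i)) ∧
  (∀ i j : ℤ, 1 < |i - j| → E i * E j = E j * E i ∧ F i * F j = F j * F i) ∧
  (∀ i j : ℤ, E i * F j - F j * E i =
    if i = j then (qv - qv⁻¹)⁻¹ • (K i * Kinv (i+1) - Kinv i * K (i+1)) else 0) ∧
  (∀ i j : ℤ, |i - j| = 1 →
    E i * E i * E j - (qv + qv⁻¹) • (E i * E j * E i) + E j * E i * E i = 0) ∧
  (∀ i j : ℤ, |i - j| = 1 →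
    F i * F i * F j - (qv + qv⁻¹) • (F i * F j * F i) + F j * F i * F i = 0)

lemma qv_ne_zero : qv ≠ 0 := RatFunc.X_ne_zero

lemma intDegree_qv_zpow (n : ℤ) : (qv ^ n).intDegree = n := by
  induction n using Int.induction_on with
  | zero => simp
  | succ k ih =>
    rw [zpow_add_one₀ qv_ne_zero, RatFunc.intDegree_mul (zpow_ne_zero _ qv_ne_zero) qv_ne_zero,
      ih, qv, RatFunc.intDegree_X]
  | pred k ih =>
    rw [zpow_sub_one₀ qv_ne_zero,
      RatFunc.intDegree_mul (zpow_ne_zero _ qv_ne_zero) (inv_ne_zero qv_ne_zero), ih,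
      RatFunc.intDegree_inv, qv, RatFunc.intDegree_X, sub_eq_add_neg]

lemma qv_zpow_injective : Function.Injective (qv ^ · : ℤ → RatFunc ℚ) := fun m n h => by
  simpa only [intDegree_qv_zpow] using congrArg RatFunc.intDegree h

lemma qv_sub_qv_inv_ne_zero : qv - qv⁻¹ ≠ 0 := by
  refine sub_ne_zero.mpr fun h => ?_
  have : (1 : ℤ) = -1 := qv_zpow_injective (by simpa only [zpow_one, zpow_neg_one] using h)
  omega

def simpleRoot (j : ℤ) : ℤ → ℤ :=
  fun i => (if i = j then 1 else 0) - (if i = j + 1 then 1 else 0)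

lemma simpleRoot_injective : Function.Injective simpleRoot := fun j k h => by
  have := congrFun h j
  simp only [simpleRoot] at this
  split_ifs at this <;> omega

lemma Set.Finite.eq_empty_of_forall_add_one_mem {s : Set ℤ} (hs : s.Finite)
    (h : ∀ i ∈ s, i + 1 ∈ s) : s = ∅ := by
  refine Set.eq_empty_of_forall_notMem fun i hi => ?_
  have hmem : ∀ n : ℕ, i + n ∈ s := fun n => by
    induction n with
    | zero => simpa using hi
    | succ n ih => simpa [add_assoc] using h _ ih
  exact Set.infinite_of_injective_forall_mem (fun m n hmn => by simpa using hmn) hmem hs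

lemma Submodule.smul_eq_zero_of_mem_span {R S M : Type*} [CommSemiring R] [Semiring S]
    [AddCommMonoid M] [Module R M] [Module S M] [SMulCommClass S R M] {s : Set M} {u : S}
    (h : ∀ y ∈ s, u • y = 0) {x : M} (hx : x ∈ Submodule.span R s) : u • x = 0 :=
  (Submodule.span_le (p := LinearMap.ker (Module.toModuleEnd R M u))).mpr h hx

section WeightSpace

variable {U : Type*} [Ring U] [Algebra (RatFunc ℚ) U] (K : ℤ → U)
  (M : Type*) [AddCommGroup M] [Module (RatFunc ℚ) M] [Module U M]
  [IsScalarTower (RatFunc ℚ) U M]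

def weightSpace (lam : ℤ → ℤ) : Submodule (RatFunc ℚ) M :=
  ⨅ i, (Module.toModuleEnd (RatFunc ℚ) M (K i)).eigenspace (qv ^ lam i)

def weights : Set (ℤ → ℤ) := {lam | weightSpace K M lam ≠ ⊥}

variable {K M}

lemma mem_weightSpace {lam : ℤ → ℤ} {x : M} :
    x ∈ weightSpace K M lam ↔ ∀ i, K i • x = qv ^ lam i • x := by
  simp [weightSpace]

lemma mem_weights_of_mem_weightSpace {lam : ℤ → ℤ} {x : M} (hx : x ∈ weightSpace K M lam)
    (hx0 : x ≠ 0) : lam ∈ weights K M :=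
  (Submodule.ne_bot_iff _).mpr ⟨x, hx, hx0⟩

lemma iSupIndep_weightSpace (hK : ∀ i j, K i * K j = K j * K i) :
    iSupIndep (weightSpace K M) := by
  let f i := Module.toModuleEnd (RatFunc ℚ) M (K i)
  have hf : ∀ i j, Commute (f i) (f j) := fun i j => by
    simp only [f, Commute, SemiconjBy, ← map_mul, hK i j]
  have := Module.End.independent_iInf_maxGenEigenspace_of_forall_mapsTo f
    fun i j μ => Module.End.mapsTo_maxGenEigenspace_of_comm (hf j i) μ
  exact (this.comp qv_zpow_injective.comp_left).mono fun lam =>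
    iInf_mono fun i => Module.End.eigenspace_le_maxGenEigenspace

lemma finite_weights [FiniteDimensional (RatFunc ℚ) M] (hK : ∀ i j, K i * K j = K j * K i) :
    (weights K M).Finite :=
  Submodule.finite_ne_bot_of_iSupIndep (iSupIndep_weightSpace hK)

lemma smul_mem_weightSpace_add {u : U} {a : ℤ → ℤ} (hu : ∀ i, K i * u = qv ^ a i • (u * K i))
    {lam : ℤ → ℤ} {x : M} (hx : x ∈ weightSpace K M lam) :
    u • x ∈ weightSpace K M (lam + a) := by
  rw [mem_weightSpace] at hx ⊢
  intro i
  rw [← mul_smul, hu i, smul_assoc, mul_smul, hx i, smul_comm u, smul_smul,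
    ← zpow_add₀ qv_ne_zero, Pi.add_apply, add_comm]

end WeightSpace

section UInfinity

variable {U : Type*} [Ring U] [Algebra (RatFunc ℚ) U] {E F K Kinv : ℤ → U}
  {M : Type*} [AddCommGroup M] [Module (RatFunc ℚ) M] [Module U M]
  [IsScalarTower (RatFunc ℚ) U M]

lemma E_smul_mem_weightSpace (hrel : UqRel U E F K Kinv) {lam : ℤ → ℤ} {x : M}
    (hx : x ∈ weightSpace K M lam) (j : ℤ) :
    E j • x ∈ weightSpace K M (lam + simpleRoot j) :=
  smul_mem_weightSpace_add (fun i => hrel.2.2.1 i j) hx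

lemma F_smul_mem_weightSpace (hrel : UqRel U E F K Kinv) {lam : ℤ → ℤ} {x : M}
    (hx : x ∈ weightSpace K M lam) (j : ℤ) :
    F j • x ∈ weightSpace K M (lam - simpleRoot j) := by
  rw [sub_eq_add_neg]
  refine smul_mem_weightSpace_add (fun i => ?_) hx
  rw [hrel.2.2.2.1 i j, Pi.neg_apply, simpleRoot, neg_sub]

lemma eq_of_E_smul_eq_zero_of_F_smul_eq_zero (hrel : UqRel U E F K Kinv) {lam : ℤ → ℤ} {x : M}
    (hx : x ∈ weightSpace K M lam) (hx0 : x ≠ 0) {i : ℤ} (hE : E i • x = 0) (hF : F i • x = 0) :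
    lam i = lam (i + 1) := by
  obtain ⟨-, hKKinv, -, -, -, hEF, -, -⟩ := hrel
  rw [mem_weightSpace] at hx
  have hKinv : ∀ j, Kinv j • x = qv ^ (-lam j) • x := fun j => by
    have h : qv ^ lam j • Kinv j • x = x := by
      rw [← smul_comm, ← hx j, ← mul_smul, (hKKinv j).2, one_smul]
    conv_rhs => rw [← h, smul_smul, ← zpow_add₀ qv_ne_zero, neg_add_cancel, zpow_zero, one_smul]
  have hKKinv_smul : (K i * Kinv (i + 1)) • x = qv ^ (lam i - lam (i + 1)) • x := by
    rw [mul_smul, hKinv, smul_comm, hx, smul_smul, ← zpow_add₀ qv_ne_zero, neg_add_eq_sub]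
  have hKinvK_smul : (Kinv i * K (i + 1)) • x = qv ^ (lam (i + 1) - lam i) • x := by
    rw [mul_smul, hx, smul_comm, hKinv, smul_smul, ← zpow_add₀ qv_ne_zero, ← sub_eq_add_neg]
  have hcartan : (E i * F i - F i * E i) • x
      = ((qv - qv⁻¹)⁻¹ * (qv ^ (lam i - lam (i + 1)) - qv ^ (lam (i + 1) - lam i))) • x := by
    rw [hEF i i, if_pos rfl, smul_assoc, sub_smul, hKKinv_smul, hKinvK_smul, ← sub_smul,
      ← mul_smul]
  rw [sub_smul, mul_smul, mul_smul, hE, hF, smul_zero, smul_zero, sub_zero, eq_comm,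
    smul_eq_zero, mul_eq_zero, inv_eq_zero] at hcartan
  rcases hcartan with (h | h) | h
  · exact absurd h qv_sub_qv_inv_ne_zero
  · have := qv_zpow_injective (sub_eq_zero.mp h)
    omega
  · exact absurd h hx0

lemma finite_setOf_E_smul_ne_zero_or_F_smul_ne_zero [FiniteDimensional (RatFunc ℚ) M]
    (hrel : UqRel U E F K Kinv) :
    {j | ∃ lam, ∃ x ∈ weightSpace K M lam, E j • x ≠ 0 ∨ F j • x ≠ 0}.Finite := by
  have hW := finite_weights (M := M) hrel.1
  -- `α_j` is a difference of two weights, and there are finitely many weights.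
  refine ((hW.image2 (· - ·) hW).preimage simpleRoot_injective.injOn).subset ?_
  rintro j ⟨lam, x, hx, hE | hF⟩
  · have hx0 : x ≠ 0 := by rintro rfl; exact hE (smul_zero _)
    exact ⟨_, mem_weights_of_mem_weightSpace (E_smul_mem_weightSpace hrel hx j) hE,
      _, mem_weights_of_mem_weightSpace hx hx0, add_sub_cancel_left _ _⟩
  · have hx0 : x ≠ 0 := by rintro rfl; exact hF (smul_zero _)
    exact ⟨_, mem_weights_of_mem_weightSpace hx hx0,
      _, mem_weights_of_mem_weightSpace (F_smul_mem_weightSpace hrel hx j) hF, sub_sub_cancel _ _⟩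

lemma E_smul_ne_zero_or_F_smul_ne_zero (hrel : UqRel U E F K Kinv) {lam : ℤ → ℤ}
    (hlam : lam ∈ weights K M) {i : ℤ} (hi : lam i ≠ lam (i + 1)) :
    ∃ x ∈ weightSpace K M lam, E i • x ≠ 0 ∨ F i • x ≠ 0 := by
  obtain ⟨x, hx, hx0⟩ := (Submodule.ne_bot_iff _).mp hlam
  refine ⟨x, hx, ?_⟩
  by_contra! h
  exact hi (eq_of_E_smul_eq_zero_of_F_smul_eq_zero hrel hx hx0 h.1 h.2)

lemma exists_mem_weights_ne_at_add_one (hrel : UqRel U E F K Kinv) {lam : ℤ → ℤ}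
    (hlam : lam ∈ weights K M) {i : ℤ} (hi : lam i ≠ lam (i + 1)) :
    ∃ ν ∈ weights K M, ν (i + 1) ≠ ν (i + 1 + 1) := by
  by_cases hlam' : lam (i + 1) ≠ lam (i + 1 + 1)
  · exact ⟨lam, hlam, hlam'⟩
  obtain ⟨x, hx, hE | hF⟩ := E_smul_ne_zero_or_F_smul_ne_zero hrel hlam hi
  · refine ⟨_, mem_weights_of_mem_weightSpace (E_smul_mem_weightSpace hrel hx i) hE, ?_⟩
    simp only [Pi.add_apply, simpleRoot]
    split_ifs <;> omega
  · refine ⟨_, mem_weights_of_mem_weightSpace (F_smul_mem_weightSpace hrel hx i) hF, ?_⟩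
    simp only [Pi.sub_apply, simpleRoot]
    split_ifs <;> omega

lemma apply_eq_apply_of_mem_weights [FiniteDimensional (RatFunc ℚ) M] (hrel : UqRel U E F K Kinv)
    {lam : ℤ → ℤ} (hlam : lam ∈ weights K M) (i j : ℤ) : lam i = lam j := by
  have hempty : {i | ∃ lam ∈ weights K M, lam i ≠ lam (i + 1)} = ∅ := by
    refine Set.Finite.eq_empty_of_forall_add_one_mem ?_
      fun i ⟨lam, hlam, hi⟩ => exists_mem_weights_ne_at_add_one hrel hlam hi
    refine (finite_setOf_E_smul_ne_zero_or_F_smul_ne_zero (M := M) hrel).subset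
      fun i ⟨lam, hlam, hi⟩ => ⟨lam, E_smul_ne_zero_or_F_smul_ne_zero hrel hlam hi⟩
  have hper : Function.Periodic lam 1 := fun i => by
    by_contra h
    exact (Set.eq_empty_iff_forall_notMem.mp hempty) i ⟨lam, hlam, Ne.symm h⟩
  have h0 : ∀ n : ℤ, lam n = lam 0 := fun n => by simpa using hper.zsmul_eq n
  rw [h0 i, h0 j]

lemma smul_eq_zero_of_mem_weightSpace [FiniteDimensional (RatFunc ℚ) M]
    (hrel : UqRel U E F K Kinv) {u : U} {lam μ : ℤ → ℤ} {x : M} (hx : x ∈ weightSpace K M lam)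
    (hu : u • x ∈ weightSpace K M μ) (i : ℤ) (hμ : μ i - μ (i + 1) ≠ lam i - lam (i + 1)) :
    u • x = 0 := by
  by_contra hu0
  have hx0 : x ≠ 0 := by rintro rfl; exact hu0 (smul_zero _)
  have hlam := apply_eq_apply_of_mem_weights hrel (mem_weights_of_mem_weightSpace hx hx0) i (i + 1)
  have hμ' := apply_eq_apply_of_mem_weights hrel (mem_weights_of_mem_weightSpace hu hu0) i (i + 1)
  omega

lemma E_smul_eq_zero_of_mem_weightSpace [FiniteDimensional (RatFunc ℚ) M]
    (hrel : UqRel U E F K Kinv) {lam : ℤ → ℤ} {x : M} (hx : x ∈ weightSpace K M lam) (i : ℤ) :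
    E i • x = 0 :=
  smul_eq_zero_of_mem_weightSpace hrel hx (E_smul_mem_weightSpace hrel hx i) i
    (by simp [simpleRoot]; omega)

lemma F_smul_eq_zero_of_mem_weightSpace [FiniteDimensional (RatFunc ℚ) M]
    (hrel : UqRel U E F K Kinv) {lam : ℤ → ℤ} {x : M} (hx : x ∈ weightSpace K M lam) (i : ℤ) :
    F i • x = 0 :=
  smul_eq_zero_of_mem_weightSpace hrel hx (F_smul_mem_weightSpace hrel hx i) i
    (by simp [simpleRoot]; omega)

end UInfinity

/-- a finite-dimensional weight module `M` over `U(∞)` is annihilated by all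
`E_i, F_i`, all its weights are constant sequences, and `M` is a direct sum of
one-dimensional modules `L(k·𝟏)`; in particular `M` is completely reducible. -/
theorem stmt_16 (U : Type) [Ring U] [Algebra (RatFunc ℚ) U]
    (E F K Kinv : ℤ → U) (hrel : UqRel U E F K Kinv)
    (M : Type) [AddCommGroup M] [Module (RatFunc ℚ) M] [Module U M]
    [IsScalarTower (RatFunc ℚ) U M] [FiniteDimensional (RatFunc ℚ) M]
    (hwt : ∀ x : M, x ∈ Submodule.span (RatFunc ℚ)
      {y : M | ∃ lam : ℤ → ℤ, ∀ i : ℤ, K i • y = (qv ^ lam i) • y}) :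
    (∀ (i : ℤ) (x : M), E i • x = 0 ∧ F i • x = 0) ∧
    (∀ (lam : ℤ → ℤ) (x : M), x ≠ 0 → (∀ i : ℤ, K i • x = (qv ^ lam i) • x) →
      ∀ i j : ℤ, lam i = lam j) ∧
    (∃ (ι : Type) (bb : Module.Basis ι (RatFunc ℚ) M), ∀ a : ι,
      (∀ i : ℤ, E i • bb a = 0 ∧ F i • bb a = 0) ∧
      ∃ k : ℤ, ∀ i : ℤ, K i • bb a = (qv ^ k) • bb a) := by
  have hweight : ∀ y ∈ {y : M | ∃ lam : ℤ → ℤ, ∀ i : ℤ, K i • y = (qv ^ lam i) • y},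
      ∃ lam, y ∈ weightSpace K M lam :=
    fun y ⟨lam, hy⟩ => ⟨lam, mem_weightSpace.mpr hy⟩
  have hann : ∀ (i : ℤ) (x : M), E i • x = 0 ∧ F i • x = 0 := fun i x =>
    ⟨Submodule.smul_eq_zero_of_mem_span (fun y hy => (hweight y hy).elim fun _ hy =>
        E_smul_eq_zero_of_mem_weightSpace hrel hy i) (hwt x),
      Submodule.smul_eq_zero_of_mem_span (fun y hy => (hweight y hy).elim fun _ hy =>
        F_smul_eq_zero_of_mem_weightSpace hrel hy i) (hwt x)⟩
  have hconst : ∀ (lam : ℤ → ℤ) (x : M), x ≠ 0 → (∀ i : ℤ, K i • x = (qv ^ lam i) • x) →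
      ∀ i j : ℤ, lam i = lam j := fun lam x hx0 hx =>
    apply_eq_apply_of_mem_weights hrel (mem_weights_of_mem_weightSpace (mem_weightSpace.mpr hx) hx0)
  let bb := Module.Basis.ofSpan (fun x _ => hwt x)
  refine ⟨hann, hconst, _, bb, fun a => ⟨fun i => hann i _, ?_⟩⟩
  obtain ⟨lam, hlam⟩ := Module.Basis.ofSpan_subset _ (Set.mem_range_self a)
  exact ⟨lam 0, fun i => by rw [hlam i, hconst lam _ (bb.ne_zero a) hlam i 0]⟩
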